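/- arXiv:1509.02007 — 2 statements merged into one kernel-verified Lean document; each statement's English description precedes it below -/
import Mathlib

section
/- Let (α_k)_{k≥1} be nonnegative reals with K := Σ_{k≥1} α_k < 1. Define β_0 := 1 and β_k := Σ_{i=1}^k α_i β_{k−i} for k ≥ 1. Then β_k ≥ 0 for all k, and Σ_{k=0}^∞ β_k = 1/(1−K). -/
/-!
Shifting the recursion gives `β (n + 1) = ∑_{k ≤ n} α (k + 1) β (n - k)`, a Cauchy product.
Nonnegativity follows by strong induction. Summing the recursion up to `N` bounds the partial sums
`S_N` of `β` by `1 + K S_N`, so `β` is summable; the Cauchy product formula then gives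
`B = 1 + K B` for `B = ∑ β`, i.e. `B = 1 / (1 - K)`.
-/

open Finset

lemma sum_range_sum_range_mul_sub_le {a b : ℕ → ℝ} {K : ℝ} (ha : ∀ k, 0 ≤ a k)
    (hb : ∀ k, 0 ≤ b k) (haK : HasSum a K) (N : ℕ) :
    ∑ n ∈ range N, ∑ k ∈ range (n + 1), a k * b (n - k) ≤ K * ∑ n ∈ range N, b n := by
  have hS : 0 ≤ ∑ n ∈ range N, b n := sum_nonneg fun n _ => hb n
  calc ∑ n ∈ range N, ∑ k ∈ range (n + 1), a k * b (n - k)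
      = ∑ m ∈ range N, a m * ∑ k ∈ range (N - m), b k := by
        rw [sum_range_diag_flip N fun k j => a k * b j]
        simp only [mul_sum]
    _ ≤ ∑ m ∈ range N, a m * ∑ k ∈ range N, b k := by
        gcongr with m
        · exact ha m
        · exact fun k _ _ => hb k
        · exact Nat.sub_le N m
    _ = (∑ m ∈ range N, a m) * ∑ n ∈ range N, b n := by rw [sum_mul]
    _ ≤ K * ∑ n ∈ range N, b n := by
        gcongr
        exact sum_le_hasSum _ (fun k _ => ha k) haK

section Renewal

variable {a b : ℕ → ℝ} (hb0 : b 0 = 1)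
  (hrec : ∀ n, b (n + 1) = ∑ k ∈ range (n + 1), a k * b (n - k))
include hb0 hrec

lemma renewal_nonneg (ha : ∀ k, 0 ≤ a k) (n : ℕ) : 0 ≤ b n := by
  induction n using Nat.strong_induction_on with
  | _ n ih =>
    rcases n with _ | n
    · rw [hb0]; exact zero_le_one
    · rw [hrec n]
      exact sum_nonneg fun k _ => mul_nonneg (ha k) (ih (n - k) (by omega))

lemma renewal_sum_range_le {K : ℝ} (ha : ∀ k, 0 ≤ a k) (haK : HasSum a K) (hK : K < 1)
    (N : ℕ) : ∑ n ∈ range N, b n ≤ 1 / (1 - K) := by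
  have hb := renewal_nonneg hb0 hrec ha
  have hS : ∑ n ∈ range N, b n ≤ 1 + K * ∑ n ∈ range N, b n := by
    rcases N with _ | N
    · simp
    calc ∑ n ∈ range (N + 1), b n
        = 1 + ∑ n ∈ range N, ∑ k ∈ range (n + 1), a k * b (n - k) := by
          rw [sum_range_succ', hb0, add_comm]
          simp only [hrec]
      _ ≤ 1 + K * ∑ n ∈ range N, b n := by
          gcongr
          exact sum_range_sum_range_mul_sub_le ha hb haK N
      _ ≤ 1 + K * ∑ n ∈ range (N + 1), b n := by
          have hK0 : 0 ≤ K := haK.nonneg ha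
          gcongr
          · exact fun k _ _ => hb k
          · exact N.le_succ
  rw [le_div_iff₀ (by linarith)]
  linarith

lemma renewal_hasSum {K : ℝ} (ha : ∀ k, 0 ≤ a k) (haK : HasSum a K) (hK : K < 1) :
    HasSum b (1 / (1 - K)) := by
  have hb := renewal_nonneg hb0 hrec ha
  have hsum : Summable b :=
    summable_of_sum_range_le hb (renewal_sum_range_le hb0 hrec ha haK hK)
  have hnorm {f : ℕ → ℝ} (hf : ∀ k, 0 ≤ f k) (h : Summable f) : Summable fun k => ‖f k‖ := by
    simpa only [Real.norm_of_nonneg (hf _)] using h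
  have htail : HasSum (fun n => b (n + 1)) (K * ∑' n, b n) := by
    simp only [hrec, ← haK.tsum_eq]
    exact hasSum_sum_range_mul_of_summable_norm (hnorm ha haK.summable) (hnorm hb hsum)
  have hfix : ∑' n, b n = 1 + K * ∑' n, b n := by
    simpa only [hb0] using htail.zero_add.tsum_eq
  have hval : ∑' n, b n = 1 / (1 - K) := by
    rw [eq_div_iff (by linarith)]
    linarith
  exact hval ▸ hsum.hasSum

end Renewal

/-- for the renewal sequence `β_0 = 1`,
`β_k = Σ_{i=1}^k α_i β_{k-i}` built from nonnegative `α` with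
`Σ_{k≥1} α_k = K < 1`, all `β_k ≥ 0` and `Σ_{k≥0} β_k = 1/(1-K)`. -/
theorem stmt1 (α : ℕ → ℝ) (hα : ∀ k, 0 ≤ α k) (K : ℝ)
    (hK : HasSum (fun k : ℕ => α (k + 1)) K) (hK1 : K < 1)
    (β : ℕ → ℝ) (hβ0 : β 0 = 1)
    (hβ : ∀ k : ℕ, 1 ≤ k → β k = ∑ i ∈ Finset.Icc 1 k, α i * β (k - i)) :
    (∀ k, 0 ≤ β k) ∧ HasSum β (1 / (1 - K)) := by
  have hrec : ∀ n, β (n + 1) = ∑ k ∈ range (n + 1), α (k + 1) * β (n - k) := by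
    intro n
    rw [hβ (n + 1) (Nat.le_add_left 1 n), ← Finset.Ico_add_one_right_eq_Icc, sum_Ico_eq_sum_range]
    refine sum_congr rfl fun k _ => ?_
    rw [add_comm 1 k, Nat.add_sub_add_right]
  have hα' : ∀ k, 0 ≤ α (k + 1) := fun k => hα (k + 1)
  exact ⟨renewal_nonneg hβ0 hrec hα', renewal_hasSum hβ0 hrec hα' hK hK1⟩
end

section
/- Let K ∈ (0,1), d ∈ ℕ, and let (m_i)_{i≥0} be a sequence of reals with 0 ≤ m_i ≤ (1−K)/(2K) for all i, m_i = 0 for i < 0 (extended to ℤ), and m_i ≤ exp(Σ_{k=1}^i α_k m_{i−k}) − 1 for all i > d, where α_k ≥ 0 and Σ_{k≥1} α_k = K. Then Σ_{i=0}^∞ m_i ≤ (d+1)·(1+K)/(2K). -/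
/-!
Write `x_i = ∑_{k=1}^{i} α_k m_{i-k}`. The bound `m ≤ (1 - K) / (2K)` gives `x_i ≤ (1 - K) / 2`,
and on that range `e^x - 1 ≤ x / (1 - x) ≤ 2x / (1 + K)`, so the recursion becomes linear:
`m_i ≤ 2 x_i / (1 + K)` for `i > d`. Summing, and exchanging the order of summation in
`∑_{i<N} x_i ≤ K ∑_{i<N} m_i`, the partial sums `S_N` satisfy
`S_N ≤ (d + 1)(1 - K) / (2K) + (2K / (1 + K)) S_N`, and `2K / (1 + K) < 1`.
-/

open Finset Real

def laggedConv (α m : ℕ → ℝ) (i : ℕ) : ℝ :=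
  ∑ k ∈ Icc 1 i, α k * m (i - k)

section LaggedConv

variable {α m : ℕ → ℝ} {K : ℝ}

lemma laggedConv_nonneg (hα : ∀ k, 0 ≤ α k) (hm : ∀ j, 0 ≤ m j) (i : ℕ) :
    0 ≤ laggedConv α m i :=
  sum_nonneg fun k _ => mul_nonneg (hα k) (hm _)

lemma laggedConv_le {C : ℝ} (hα : ∀ k, 0 ≤ α k) (hαK : ∀ n, ∑ k ∈ Icc 1 n, α k ≤ K)
    (hmC : ∀ j, m j ≤ C) (hC : 0 ≤ C) (i : ℕ) :
    laggedConv α m i ≤ K * C :=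
  calc laggedConv α m i ≤ ∑ k ∈ Icc 1 i, α k * C :=
        sum_le_sum fun k _ => mul_le_mul_of_nonneg_left (hmC _) (hα k)
    _ = (∑ k ∈ Icc 1 i, α k) * C := (sum_mul ..).symm
    _ ≤ K * C := mul_le_mul_of_nonneg_right (hαK i) hC

lemma sum_range_laggedConv_le (hα : ∀ k, 0 ≤ α k) (hm : ∀ j, 0 ≤ m j)
    (hαK : ∀ n, ∑ k ∈ Icc 1 n, α k ≤ K) (N : ℕ) :
    ∑ i ∈ range N, laggedConv α m i ≤ K * ∑ j ∈ range N, m j := by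
  set S := ∑ j ∈ range N, m j
  have hS : 0 ≤ S := sum_nonneg fun j _ => hm j
  have hshift : ∀ k, ∑ i ∈ Ico k N, m (i - k) ≤ S := fun k => by
    rw [sum_Ico_eq_sum_range]
    simp only [Nat.add_sub_cancel_left]
    exact sum_le_sum_of_subset_of_nonneg (range_subset_range.2 (Nat.sub_le N k))
      fun j _ _ => hm j
  calc ∑ i ∈ range N, laggedConv α m i
      = ∑ k ∈ Icc 1 N, ∑ i ∈ Ico k N, α k * m (i - k) := by
        refine sum_comm' fun i k => ?_
        simp only [mem_range, mem_Icc, mem_Ico]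
        omega
    _ = ∑ k ∈ Icc 1 N, α k * ∑ i ∈ Ico k N, m (i - k) := by simp only [mul_sum]
    _ ≤ ∑ k ∈ Icc 1 N, α k * S :=
        sum_le_sum fun k _ => mul_le_mul_of_nonneg_left (hshift k) (hα k)
    _ = (∑ k ∈ Icc 1 N, α k) * S := (sum_mul ..).symm
    _ ≤ K * S := mul_le_mul_of_nonneg_right (hαK N) hS

theorem sum_range_le_of_le_mul_laggedConv {C c : ℝ} {d : ℕ} (hα : ∀ k, 0 ≤ α k)
    (hm : ∀ i, 0 ≤ m i) (hαK : ∀ n, ∑ k ∈ Icc 1 n, α k ≤ K) (hmC : ∀ i ≤ d, m i ≤ C)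
    (hc : 0 ≤ c) (hcK : c * K < 1) (hlin : ∀ i, d < i → m i ≤ c * laggedConv α m i)
    (N : ℕ) :
    ∑ i ∈ range N, m i ≤ (d + 1) * C / (1 - c * K) := by
  set S := ∑ i ∈ range N, m i
  have hC : 0 ≤ C := (hm 0).trans (hmC 0 d.zero_le)
  have hpointwise : ∀ i, m i ≤ (if i ∈ range (d + 1) then C else 0) + c * laggedConv α m i := by
    intro i
    have hconv : 0 ≤ c * laggedConv α m i := mul_nonneg hc (laggedConv_nonneg hα hm i)
    by_cases hi : i ≤ d
    · rw [if_pos (mem_range.2 (Nat.lt_succ_of_le hi))]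
      linarith [hmC i hi]
    · rw [if_neg (by simpa using hi), zero_add]
      exact hlin i (not_le.1 hi)
  have hhead : ∑ i ∈ range N, (if i ∈ range (d + 1) then C else 0) ≤ (d + 1) * C := by
    rw [sum_ite_mem]
    calc ∑ _ ∈ range N ∩ range (d + 1), C ≤ ∑ _ ∈ range (d + 1), C :=
          sum_le_sum_of_subset_of_nonneg inter_subset_right fun _ _ _ => hC
      _ = (d + 1) * C := by simp
  have hS : S ≤ (d + 1) * C + c * (K * S) :=
    calc S ≤ ∑ i ∈ range N, ((if i ∈ range (d + 1) then C else 0) + c * laggedConv α m i) :=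
          sum_le_sum fun i _ => hpointwise i
      _ = ∑ i ∈ range N, (if i ∈ range (d + 1) then C else 0)
            + c * ∑ i ∈ range N, laggedConv α m i := by rw [sum_add_distrib, mul_sum]
      _ ≤ (d + 1) * C + c * (K * S) :=
          add_le_add hhead (mul_le_mul_of_nonneg_left (sum_range_laggedConv_le hα hm hαK N) hc)
  rw [le_div_iff₀ (sub_pos.2 hcK)]
  linarith

end LaggedConv

lemma sum_Icc_one_le_of_hasSum {α : ℕ → ℝ} {K : ℝ} (hα : ∀ k, 0 ≤ α k)
    (hαsum : HasSum (fun k => α (k + 1)) K) (n : ℕ) :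
    ∑ k ∈ Icc 1 n, α k ≤ K := by
  rw [← Ico_add_one_right_eq_Icc, sum_Ico_eq_sum_range]
  simpa only [add_comm 1] using sum_le_hasSum (range (n + 1 - 1)) (fun k _ => hα _) hαsum

lemma exp_sub_one_le_div {x a : ℝ} (hx : 0 ≤ x) (ha : 0 < a) (hxa : x ≤ 1 - a) :
    exp x - 1 ≤ x / a := by
  have hx1 : 0 < 1 - x := by linarith
  calc exp x - 1 ≤ 1 / (1 - x) - 1 := by
        linarith [exp_bound_div_one_sub_of_interval hx (by linarith : x < 1)]
    _ = x / (1 - x) := by field_simp; ring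
    _ ≤ x / a := div_le_div_of_nonneg_left hx ha (by linarith)

/-- if `0 ≤ m_i ≤ (1−K)/(2K)`, `m` satisfies the recursive
exponential inequality `m_i ≤ exp(Σ_{k=1}^i α_k m_{i−k}) − 1` for `i > d`,
with `α_k ≥ 0` summing to `K ∈ (0,1)`, then
`Σ_{i≥0} m_i ≤ (d+1)·(1+K)/(2K)`. -/
theorem stmt9 (K : ℝ) (hK0 : 0 < K) (hK1 : K < 1) (d : ℕ)
    (α : ℕ → ℝ) (hα : ∀ k, 0 ≤ α k)
    (hαsum : HasSum (fun k : ℕ => α (k + 1)) K)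
    (m : ℕ → ℝ)
    (hm0 : ∀ i, 0 ≤ m i) (hm1 : ∀ i, m i ≤ (1 - K) / (2 * K))
    (hrec : ∀ i : ℕ, d < i →
      m i ≤ Real.exp (∑ k ∈ Finset.Icc 1 i, α k * m (i - k)) - 1) :
    ∑' i : ℕ, m i ≤ (d + 1) * (1 + K) / (2 * K) := by
  have hαK := sum_Icc_one_le_of_hasSum hα hαsum
  have hC : 0 ≤ (1 - K) / (2 * K) := div_nonneg (by linarith) (by linarith)
  have hlin : ∀ i, d < i → m i ≤ 2 / (1 + K) * laggedConv α m i := by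
    intro i hi
    have hsmall : laggedConv α m i ≤ 1 - (1 + K) / 2 := by
      have hKC : K * ((1 - K) / (2 * K)) = 1 - (1 + K) / 2 := by field_simp; ring
      exact hKC ▸ laggedConv_le hα hαK hm1 hC i
    calc m i ≤ exp (laggedConv α m i) - 1 := hrec i hi
      _ ≤ laggedConv α m i / ((1 + K) / 2) :=
          exp_sub_one_le_div (laggedConv_nonneg hα hm0 i) (by linarith) hsmall
      _ = 2 / (1 + K) * laggedConv α m i := by field_simp
  refine Real.tsum_le_of_sum_range_le hm0 fun N => ?_
  calc ∑ i ∈ range N, m i ≤ (d + 1) * ((1 - K) / (2 * K)) / (1 - 2 / (1 + K) * K) :=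
        sum_range_le_of_le_mul_laggedConv hα hm0 hαK (fun i _ => hm1 i) (by positivity)
          (by rw [div_mul_eq_mul_div, div_lt_one (by linarith)]; linarith) hlin N
    _ = (d + 1) * (1 + K) / (2 * K) := by
        have h1K : (1 : ℝ) - K ≠ 0 := by linarith
        rw [show 1 - 2 / (1 + K) * K = (1 - K) / (1 + K) by field_simp; ring]
        field_simp
end
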